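/- Let N and q and p be natural numbers with q ≥ 1, and let v₁,…,v_q and w₁,…,w_p be vectors in ℝ^N such that v₁,…,v_q span ℝ^N. Then there exists a constant κ > 0, depending only on v₁,…,v_q, such that for every P ∈ ℝ^N, every R > 0 and all ε > δ > 0 one has inf_{Q ∈ 𝒫_{ε,R}} sup_{Q' ∈ 𝒫_{ε−δ,R}} exp(−2π (Q − Q')·P) ≤ exp(−κ δ |P|), where · denotes the Euclidean inner product and |P| the Euclidean norm. -/

import Mathlib

/-!
Write `a j = ⟪v j, P⟫`. Moving the `v`-coefficients of a point of `𝒫_{ε-δ,R}` by `δ • sign (a j)`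
lands in `𝒫_{ε,R}` and raises `⟪·, P⟫` by `δ ∑ |a j|`. Hence the supremum of `⟪·, P⟫` on `𝒫_{ε,R}`
exceeds its values on `𝒫_{ε-δ,R}` by `δ ∑ |a j|`, and a near-maximiser `Q ∈ 𝒫_{ε,R}` beats every
`Q' ∈ 𝒫_{ε-δ,R}` by half of that. Because the `v j` span, `P ↦ (a j)_j` is injective, hence
antilipschitz, so `∑ |a j| ≥ c ‖P‖`; this gives `κ = π c`.
-/

/-- The set 𝒫_{ε,R} built from the vectors `v` and `w`:
all sums `∑ s_j • v j + ∑ r_h • w h` with `s_j ∈ (−ε, 1+ε)` and `r_h ∈ (−R, R)`. -/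
def Pset {N q p : ℕ} (v : Fin q → EuclideanSpace ℝ (Fin N))
    (w : Fin p → EuclideanSpace ℝ (Fin N)) (ε R : ℝ) :
    Set (EuclideanSpace ℝ (Fin N)) :=
  {x | ∃ (s : Fin q → ℝ) (r : Fin p → ℝ),
    (∀ j, s j ∈ Set.Ioo (-ε) (1 + ε)) ∧ (∀ h, r h ∈ Set.Ioo (-R) R) ∧
    x = ∑ j, s j • v j + ∑ h, r h • w h}

open Finset Real
open scoped RealInnerProductSpace

theorem exists_pos_mul_norm_le_sum_abs_inner {ι E : Type*} [Fintype ι] [NormedAddCommGroup E]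
    [InnerProductSpace ℝ E] [FiniteDimensional ℝ E] {v : ι → E}
    (hv : Submodule.span ℝ (Set.range v) = ⊤) :
    ∃ c > 0, ∀ P : E, c * ‖P‖ ≤ ∑ j, |⟪v j, P⟫| := by
  let T : E →ₗ[ℝ] ι → ℝ := LinearMap.pi fun j => innerₗ E (v j)
  have hT : Function.Injective T := by
    rw [← LinearMap.ker_eq_bot, Submodule.eq_bot_iff]
    intro P hP
    have h : innerₗ E P = 0 := LinearMap.ext_on_range hv fun j => by
      simpa [T, real_inner_comm] using congrFun (LinearMap.mem_ker.mp hP) j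
    simpa using LinearMap.congr_fun h P
  obtain ⟨K, hK, hanti⟩ := T.injective_iff_antilipschitz.mp hT
  refine ⟨(K : ℝ)⁻¹, by positivity, fun P => ?_⟩
  have hTP : ‖T P‖ ≤ ∑ j, |⟪v j, P⟫| :=
    (pi_norm_le_iff_of_nonneg (by positivity)).mpr fun j =>
      single_le_sum (f := fun j => |⟪v j, P⟫|) (fun _ _ => abs_nonneg _) (mem_univ j)
  rw [inv_mul_le_iff₀ (by positivity)]
  calc ‖P‖ ≤ K * ‖T P‖ := by simpa using hanti.le_mul_dist P 0
    _ ≤ K * ∑ j, |⟪v j, P⟫| := by gcongr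

theorem exists_forall_add_le_of_bddAbove {α β : Type*} [Nonempty α] {f : α → ℝ} {g : β → ℝ}
    {d d' : ℝ} (hf : BddAbove (Set.range f)) (hd : d' < d) (hgf : ∀ y, ∃ x, g y + d ≤ f x) :
    ∃ x, ∀ y, g y + d' ≤ f x := by
  obtain ⟨x, hx⟩ := exists_lt_of_lt_ciSup (sub_lt_self (⨆ x, f x) (sub_pos.mpr hd))
  refine ⟨x, fun y => ?_⟩
  obtain ⟨x', hx'⟩ := hgf y
  linarith [le_ciSup hf x']

theorem Real.iInf_iSup_le_of_le {α β : Type*} {F : α → β → ℝ} {a : ℝ} (hF : ∀ x y, 0 ≤ F x y)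
    (x : α) (hx : ∀ y, F x y ≤ a) (ha : 0 ≤ a) : ⨅ x, ⨆ y, F x y ≤ a := by
  refine (ciInf_le ⟨0, ?_⟩ x).trans (Real.iSup_le hx ha)
  rintro _ ⟨x', rfl⟩
  exact Real.iSup_nonneg (hF x')

section Pset

variable {N q p : ℕ} (v : Fin q → EuclideanSpace ℝ (Fin N))
  (w : Fin p → EuclideanSpace ℝ (Fin N))

theorem zero_mem_Pset {ε R : ℝ} (hε : 0 < ε) (hR : 0 < R) : 0 ∈ Pset v w ε R :=
  ⟨0, 0, fun _ => ⟨by simpa using hε, by simp; linarith⟩, fun _ => ⟨by simpa using hR, hR⟩,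
    by simp⟩

theorem inner_sum_smul_add_sum_smul (s : Fin q → ℝ) (r : Fin p → ℝ)
    (P : EuclideanSpace ℝ (Fin N)) :
    ⟪∑ j, s j • v j + ∑ h, r h • w h, P⟫ = ∑ j, s j * ⟪v j, P⟫ + ∑ h, r h * ⟪w h, P⟫ := by
  simp only [inner_add_left, sum_inner, real_inner_smul_left]

theorem bddAbove_inner_Pset {ε R : ℝ} (P : EuclideanSpace ℝ (Fin N)) :
    BddAbove (Set.range fun Q : Pset v w ε R => ⟪(Q : EuclideanSpace ℝ (Fin N)), P⟫) := by
  refine ⟨∑ j, (1 + ε) * |⟪v j, P⟫| + ∑ h, R * |⟪w h, P⟫|, ?_⟩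
  rintro _ ⟨⟨_, s, r, hs, hr, rfl⟩, rfl⟩
  dsimp only
  rw [inner_sum_smul_add_sum_smul]
  refine add_le_add (sum_le_sum fun j _ => ?_) (sum_le_sum fun h _ => ?_)
  · have hsj : |s j| ≤ 1 + ε := abs_le.mpr ⟨by linarith [(hs j).1], (hs j).2.le⟩
    calc s j * ⟪v j, P⟫ ≤ |s j * ⟪v j, P⟫| := le_abs_self _
      _ ≤ (1 + ε) * |⟪v j, P⟫| := by rw [abs_mul]; gcongr
  · have hrh : |r h| ≤ R := abs_le.mpr ⟨(hr h).1.le, (hr h).2.le⟩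
    calc r h * ⟪w h, P⟫ ≤ |r h * ⟪w h, P⟫| := le_abs_self _
      _ ≤ R * |⟪w h, P⟫| := by rw [abs_mul]; gcongr

theorem exists_mem_Pset_inner_eq_add {ε δ R : ℝ} (hδ : 0 ≤ δ) {Q' : EuclideanSpace ℝ (Fin N)}
    (hQ' : Q' ∈ Pset v w (ε - δ) R) (P : EuclideanSpace ℝ (Fin N)) :
    ∃ Q ∈ Pset v w ε R, ⟪Q', P⟫ + δ * ∑ j, |⟪v j, P⟫| = ⟪Q, P⟫ := by
  obtain ⟨s, r, hs, hr, rfl⟩ := hQ'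
  refine ⟨_, ⟨fun j => s j + δ * SignType.sign ⟪v j, P⟫, r, fun j => ?_, hr, rfl⟩, ?_⟩
  · have hσ : |((SignType.sign ⟪v j, P⟫ : SignType) : ℝ)| ≤ 1 := by
      rcases lt_trichotomy ⟪v j, P⟫ 0 with h | h | h <;> simp [h]
    obtain ⟨hσ₁, hσ₂⟩ := abs_le.mp hσ
    have := mul_le_mul_of_nonneg_left hσ₁ hδ
    have := mul_le_mul_of_nonneg_left hσ₂ hδ
    constructor <;> linarith [(hs j).1, (hs j).2]
  · simp only [inner_sum_smul_add_sum_smul, add_mul, sum_add_distrib, mul_sum, mul_assoc,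
      sign_mul_self]
    ring

theorem exists_mem_Pset_forall_inner_add_le {ε δ R c : ℝ} (hR : 0 < R) (hδ : 0 < δ)
    (hδε : δ < ε) (hc : 0 < c) (P : EuclideanSpace ℝ (Fin N))
    (hcP : c * ‖P‖ ≤ ∑ j, |⟪v j, P⟫|) :
    ∃ Q ∈ Pset v w ε R, ∀ Q' ∈ Pset v w (ε - δ) R, ⟪Q', P⟫ + δ * c * ‖P‖ / 2 ≤ ⟪Q, P⟫ := by
  have h0 : 0 ∈ Pset v w ε R := zero_mem_Pset v w (by linarith) hR
  rcases eq_or_ne P 0 with rfl | hP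
  · exact ⟨0, h0, fun _ _ => by simp⟩
  have : Nonempty (Pset v w ε R) := ⟨⟨0, h0⟩⟩
  have hd : δ * c * ‖P‖ / 2 < δ * ∑ j, |⟪v j, P⟫| := by
    have hP' : 0 < ‖P‖ := norm_pos_iff.mpr hP
    nlinarith [mul_pos hc hP']
  have hshift : ∀ Q' : Pset v w (ε - δ) R,
      ∃ Q : Pset v w ε R, ⟪(Q' : EuclideanSpace ℝ (Fin N)), P⟫ + δ * ∑ j, |⟪v j, P⟫|
        ≤ ⟪(Q : EuclideanSpace ℝ (Fin N)), P⟫ := fun ⟨Q', hQ'⟩ => by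
    obtain ⟨Q, hQ, h⟩ := exists_mem_Pset_inner_eq_add v w hδ.le hQ' P
    exact ⟨⟨Q, hQ⟩, h.le⟩
  obtain ⟨⟨Q, hQ⟩, hQmax⟩ :=
    exists_forall_add_le_of_bddAbove (bddAbove_inner_Pset v w P) hd hshift
  exact ⟨Q, hQ, fun Q' hQ' => hQmax ⟨Q', hQ'⟩⟩

end Pset

theorem fourier_type_general (N q p : ℕ)
    (v : Fin q → EuclideanSpace ℝ (Fin N)) (w : Fin p → EuclideanSpace ℝ (Fin N))
    (hspan : Submodule.span ℝ (Set.range v) = ⊤) :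
    ∃ κ > (0 : ℝ), ∀ (P : EuclideanSpace ℝ (Fin N)) (R ε δ : ℝ),
      0 < R → 0 < δ → δ < ε →
      (⨅ Q : Pset v w ε R, ⨆ Q' : Pset v w (ε - δ) R,
          Real.exp (-2 * Real.pi *
            (inner ℝ ((Q : EuclideanSpace ℝ (Fin N)) - (Q' : EuclideanSpace ℝ (Fin N))) P : ℝ)))
        ≤ Real.exp (-κ * δ * ‖P‖) := by
  obtain ⟨c, hc, hcP⟩ := exists_pos_mul_norm_le_sum_abs_inner hspan
  refine ⟨π * c, by positivity, fun P R ε δ hR hδ hδε => ?_⟩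
  obtain ⟨Q, hQ, hgap⟩ := exists_mem_Pset_forall_inner_add_le v w hR hδ hδε hc P (hcP P)
  refine Real.iInf_iSup_le_of_le (fun _ _ => (exp_pos _).le) ⟨Q, hQ⟩ (fun Q' => ?_)
    (exp_pos _).le
  have := hgap Q' Q'.2
  rw [exp_le_exp, inner_sub_left]
  nlinarith [pi_pos]

/-- The Fourier-type estimate: there is `κ > 0`, depending only on `v`, such that for all
`P`, `R > 0` and `ε > δ > 0`,
`inf_{Q ∈ 𝒫_{ε,R}} sup_{Q' ∈ 𝒫_{ε−δ,R}} exp(−2π(Q−Q')·P) ≤ exp(−κ δ |P|)`. -/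
theorem fourier_type (N q p : ℕ) (hq : 1 ≤ q)
    (v : Fin q → EuclideanSpace ℝ (Fin N)) (w : Fin p → EuclideanSpace ℝ (Fin N))
    (hspan : Submodule.span ℝ (Set.range v) = ⊤) :
    ∃ κ > (0 : ℝ), ∀ (P : EuclideanSpace ℝ (Fin N)) (R ε δ : ℝ),
      0 < R → 0 < δ → δ < ε →
      (⨅ Q : Pset v w ε R, ⨆ Q' : Pset v w (ε - δ) R,
          Real.exp (-2 * Real.pi *
            (inner ℝ ((Q : EuclideanSpace ℝ (Fin N)) - (Q' : EuclideanSpace ℝ (Fin N))) P : ℝ)))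
        ≤ Real.exp (-κ * δ * ‖P‖) :=
  fourier_type_general N q p v w hspan
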